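/- arXiv:2604.11421 — 3 statements merged into one kernel-verified Lean document; each statement's English description precedes it below -/
import Mathlib

section
/- Let X, Y ∈ ℝ^{m×m}, Z ∈ ℝ^{p×m}, and ε > 0, and set N = XᵀX + (Y − Yᵀ) + ZᵀZ + εI. Then I + N is invertible, and the matrix Cayley(N) = (I − N)(I + N)^{-1} satisfies Cayley(N)ᵀ · Cayley(N) ≺ I, i.e., I − Cayley(N)ᵀ Cayley(N) is positive definite. -/
/-!
With `A = 1 + N` and `B = 1 - N` one has `Aᴴ A - Bᴴ B = 2 (N + Nᴴ)`, and whenever `A` is invertible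
`1 - (B A⁻¹)ᴴ (B A⁻¹) = (A⁻¹)ᴴ (Aᴴ A - Bᴴ B) A⁻¹`. So the Cayley transform of any `N` with positive
definite Hermitian part is a strict contraction. For the given `N` the skew term `Y - Yᵀ` cancels
in `N + Nᵀ = 2 (XᵀX + ZᵀZ + εI)`, which is positive definite.
-/

open Matrix

namespace Matrix

variable {n : Type*} [Fintype n] [DecidableEq n]

theorem conjTranspose_one_add_mul_sub_conjTranspose_one_sub_mul {R : Type*} [Ring R] [StarRing R]
    (N : Matrix n n R) :
    (1 + N)ᴴ * (1 + N) - (1 - N)ᴴ * (1 - N) = (N + Nᴴ) + (N + Nᴴ) := by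
  simp only [conjTranspose_add, conjTranspose_sub, conjTranspose_one]
  noncomm_ring

variable {K : Type*} [Field K] [PartialOrder K] [StarRing K] [StarOrderedRing K]

theorem isUnit_of_posDef_conjTranspose_mul_self_sub {A B : Matrix n n K}
    (h : (Aᴴ * A - Bᴴ * B).PosDef) : IsUnit A := by
  have hAA : IsUnit (Aᴴ * A) := by
    simpa using (h.add_posSemidef (posSemidef_conjTranspose_mul_self B)).isUnit
  rw [isUnit_iff_isUnit_det, det_mul] at hAA
  exact (isUnit_iff_isUnit_det A).2 (isUnit_of_mul_isUnit_right hAA)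

theorem posDef_one_sub_conjTranspose_mul_self_mul_inv {A B : Matrix n n K}
    (h : (Aᴴ * A - Bᴴ * B).PosDef) : (1 - (B * A⁻¹)ᴴ * (B * A⁻¹)).PosDef := by
  have hA := isUnit_of_posDef_conjTranspose_mul_self_sub h
  have hone : (A⁻¹)ᴴ * Aᴴ * (A * A⁻¹) = 1 := by
    rw [← conjTranspose_mul, mul_nonsing_inv _ ((isUnit_iff_isUnit_det A).1 hA),
      conjTranspose_one, Matrix.mul_one]
  have hconj : 1 - (B * A⁻¹)ᴴ * (B * A⁻¹) = (A⁻¹)ᴴ * (Aᴴ * A - Bᴴ * B) * A⁻¹ := by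
    rw [← hone, conjTranspose_mul]
    noncomm_ring
  rw [hconj]
  exact h.conjTranspose_mul_mul_same (mulVec_injective_of_isUnit (isUnit_nonsing_inv_iff.2 hA))

noncomputable def cayley (N : Matrix n n K) : Matrix n n K := (1 - N) * (1 + N)⁻¹

theorem isUnit_one_add_and_posDef_one_sub_cayley {N : Matrix n n K} (hN : (N + Nᴴ).PosDef) :
    IsUnit (1 + N) ∧ (1 - (cayley N)ᴴ * cayley N).PosDef := by
  have h : ((1 + N)ᴴ * (1 + N) - (1 - N)ᴴ * (1 - N)).PosDef := by
    rw [conjTranspose_one_add_mul_sub_conjTranspose_one_sub_mul]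
    exact hN.add hN
  exact ⟨isUnit_of_posDef_conjTranspose_mul_self_sub h,
    posDef_one_sub_conjTranspose_mul_self_mul_inv h⟩

end Matrix

/-- for `N = XᵀX + (Y − Yᵀ) + ZᵀZ + εI` with `ε > 0`, the matrix
`I + N` is invertible and the Cayley transform `(I − N)(I + N)⁻¹` satisfies
`Cayley(N)ᵀ·Cayley(N) ≺ I`. -/
theorem cayley_contraction {m p : ℕ}
    (X Y : Matrix (Fin m) (Fin m) ℝ) (Z : Matrix (Fin p) (Fin m) ℝ)
    (ε : ℝ) (hε : 0 < ε)
    (N : Matrix (Fin m) (Fin m) ℝ)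
    (hN : N = Xᵀ * X + (Y - Yᵀ) + Zᵀ * Z + ε • (1 : Matrix (Fin m) (Fin m) ℝ)) :
    IsUnit (1 + N) ∧
      (1 - ((1 - N) * (1 + N)⁻¹)ᵀ * ((1 - N) * (1 + N)⁻¹)).PosDef := by
  simp only [← conjTranspose_eq_transpose_of_trivial] at hN ⊢
  set S := Xᴴ * X + Zᴴ * Z + ε • (1 : Matrix (Fin m) (Fin m) ℝ)
  have hS : S.PosDef := PosDef.posSemidef_add
    ((posSemidef_conjTranspose_mul_self X).add (posSemidef_conjTranspose_mul_self Z))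
    (PosDef.one.smul hε)
  have hsym : N + Nᴴ = S + S := by
    simp only [hN, S, conjTranspose_add, conjTranspose_sub, conjTranspose_mul, conjTranspose_smul,
      conjTranspose_conjTranspose, conjTranspose_one, star_trivial]
    abel
  exact isUnit_one_add_and_posDef_one_sub_cayley (hsym ▸ hS.add hS)
end

section
/- (Generalized Cayley transform, sufficiency.) Let n ≥ m, let X, Y ∈ ℝ^{m×m}, Z ∈ ℝ^{(n−m)×m}, and ε > 0, and set N = XᵀX + (Y − Yᵀ) + ZᵀZ + εI. Then I + N is invertible, and the n × m matrix M formed by stacking Cayley(N) = (I − N)(I + N)^{-1} on top of −2Z(I + N)^{-1} satisfies Mᵀ M ≺ I, i.e., I − MᵀM is positive definite. -/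
/-!
With `A = I + N`, expanding the two blocks of `M` gives
`I - MᵀM = A⁻ᵀ (AᵀA - (I - N)ᵀ(I - N) - 4ZᵀZ) A⁻¹ = A⁻ᵀ (2(N + Nᵀ) - 4ZᵀZ) A⁻¹`.
The skew part `Y - Yᵀ` cancels in `N + Nᵀ = 2(XᵀX + ZᵀZ + εI)`, so the middle factor is
`4(XᵀX + εI) ≻ 0`, and congruence by the invertible `A⁻¹` preserves positive definiteness.
Invertibility of `A` itself follows because its symmetric part `A + Aᵀ` is positive definite.
-/

open Matrix

namespace Matrix

theorem isUnit_of_posDef_add_conjTranspose {n K : Type*} [Fintype n] [DecidableEq n] [Field K]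
    [PartialOrder K] [StarRing K] {A : Matrix n n K} (hA : (A + Aᴴ).PosDef) : IsUnit A := by
  refine mulVec_injective_iff_isUnit.mp fun x y hxy => by_contra fun hne => ?_
  have hker : A *ᵥ (x - y) = 0 := by rw [mulVec_sub, hxy, sub_self]
  have hpos := hA.dotProduct_mulVec_pos (sub_ne_zero.mpr hne)
  rw [add_mulVec, dotProduct_add, hker, dotProduct_mulVec, ← star_mulVec, hker] at hpos
  simp at hpos

section GeneralizedCayley

variable {m p R : Type*} [Fintype m] [DecidableEq m] [Fintype p] [CommRing R]

noncomputable def generalizedCayley (N : Matrix m m R) (Z : Matrix p m R) :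
    Matrix (m ⊕ p) m R :=
  fromRows ((1 - N) * (1 + N)⁻¹) ((-2 : R) • (Z * (1 + N)⁻¹))

theorem one_sub_transpose_mul_generalizedCayley {N : Matrix m m R} (hN : IsUnit (1 + N))
    (Z : Matrix p m R) :
    1 - (generalizedCayley N Z)ᵀ * generalizedCayley N Z =
      (1 + N)⁻¹ᵀ * ((2 : R) • (N + Nᵀ) - (4 : R) • (Zᵀ * Z)) * (1 + N)⁻¹ := by
  set A := 1 + N
  have hA : A * A⁻¹ = 1 := mul_nonsing_inv A ((isUnit_iff_isUnit_det A).mp hN)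
  have hone : (1 : Matrix m m R) = A⁻¹ᵀ * (Aᵀ * A) * A⁻¹ := by
    calc (1 : Matrix m m R) = (A * A⁻¹)ᵀ * (A * A⁻¹) := by rw [hA, transpose_one, Matrix.mul_one]
      _ = A⁻¹ᵀ * (Aᵀ * A) * A⁻¹ := by simp only [transpose_mul, Matrix.mul_assoc]
  have hgram : (generalizedCayley N Z)ᵀ * generalizedCayley N Z =
      A⁻¹ᵀ * ((1 - N)ᵀ * (1 - N) + (4 : R) • (Zᵀ * Z)) * A⁻¹ := by
    rw [generalizedCayley, transpose_fromRows, fromCols_mul_fromRows]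
    simp only [transpose_mul, transpose_smul, Matrix.mul_assoc, Matrix.mul_add, Matrix.add_mul,
      Matrix.mul_smul, Matrix.smul_mul]
    module
  have hdiff : Aᵀ * A - (1 - N)ᵀ * (1 - N) = (2 : R) • (N + Nᵀ) := by
    simp only [A, transpose_add, transpose_sub, transpose_one, Matrix.add_mul, Matrix.mul_add,
      Matrix.sub_mul, Matrix.mul_sub, Matrix.one_mul, Matrix.mul_one]
    module
  rw [hgram, ← hdiff]
  nth_rewrite 1 [hone]
  simp only [← Matrix.mul_sub, ← Matrix.sub_mul, sub_add_eq_sub_sub]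

end GeneralizedCayley

end Matrix

/-- generalized Cayley transform, sufficiency: for
`N = XᵀX + (Y − Yᵀ) + ZᵀZ + εI` with `ε > 0`, the matrix `I + N` is invertible
and the stacked matrix `M = [Cayley(N); −2Z(I+N)⁻¹]` (rows indexed by
`Fin m ⊕ Fin p`, representing an `n × m` matrix with `n = m + p ≥ m`) satisfies
`MᵀM ≺ I`. -/
theorem generalized_cayley_sufficiency {m p : ℕ}
    (X Y : Matrix (Fin m) (Fin m) ℝ) (Z : Matrix (Fin p) (Fin m) ℝ)
    (ε : ℝ) (hε : 0 < ε)
    (N : Matrix (Fin m) (Fin m) ℝ)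
    (hN : N = Xᵀ * X + (Y - Yᵀ) + Zᵀ * Z + ε • (1 : Matrix (Fin m) (Fin m) ℝ))
    (M : Matrix (Fin m ⊕ Fin p) (Fin m) ℝ)
    (hM : M = Matrix.fromRows ((1 - N) * (1 + N)⁻¹) ((-2 : ℝ) • (Z * (1 + N)⁻¹))) :
    IsUnit (1 + N) ∧ (1 - Mᵀ * M).PosDef := by
  set D := Xᵀ * X + ε • (1 : Matrix (Fin m) (Fin m) ℝ)
  have hD : D.PosDef :=
    (PosDef.one.smul hε).posSemidef_add (by simpa using posSemidef_conjTranspose_mul_self X)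
  have hZ : (Zᵀ * Z).PosSemidef := by simpa using posSemidef_conjTranspose_mul_self Z
  have hsym : N + Nᵀ = (2 : ℝ) • (D + Zᵀ * Z) := by
    subst hN
    simp only [D, transpose_add, transpose_sub, transpose_mul, transpose_smul, transpose_one,
      transpose_transpose]
    module
  have hU : IsUnit (1 + N) := by
    refine isUnit_of_posDef_add_conjTranspose ?_
    rw [conjTranspose_eq_transpose_of_trivial, transpose_add, transpose_one, add_add_add_comm,
      hsym, ← two_smul ℝ, ← smul_add]
    exact (PosDef.one.add (hD.add_posSemidef hZ)).smul two_pos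
  refine ⟨hU, ?_⟩
  rw [show M = generalizedCayley N Z from hM, one_sub_transpose_mul_generalizedCayley hU, hsym,
    show (2 : ℝ) • (2 : ℝ) • (D + Zᵀ * Z) - (4 : ℝ) • (Zᵀ * Z) = (4 : ℝ) • D by module,
    ← conjTranspose_eq_transpose_of_trivial]
  exact (hD.smul four_pos).conjTranspose_mul_mul_same
    (mulVec_injective_of_isUnit (isUnit_nonsing_inv_iff.mpr hU))
end

section
/- (Theorem 1, well-posedness with the Cayley parametrization.) Let L > 0 and let φ : ℝ^{n_z} → ℝ^{n_w} be L-Lipschitz with respect to the Euclidean norms. Assume n_w ≥ n_z, let X, Y ∈ ℝ^{n_z × n_z}, Z ∈ ℝ^{(n_w − n_z) × n_z}, ε > 0, and d ∈ ℝ; set N = XᵀX + (Y − Yᵀ) + ZᵀZ + εI, let D̄ be the n_w × n_z matrix obtained by stacking Cayley(N) = (I − N)(I + N)^{-1} on top of −2Z(I + N)^{-1}, and set D = (sigmoid(d)/L) · D̄ᵀ (an n_z × n_w matrix). Then for every n_z × n_x matrix C, every n_z × n_u matrix E, and every x ∈ ℝ^{n_x}, u ∈ ℝ^{n_u}, the equation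 z = D·φ(z) + C·x + E·u has a unique solution z⋆ ∈ ℝ^{n_z}. -/
/-!
Put `v = (I + N)⁻¹ w`. Then
`‖Cayley(N) w‖² + ‖2Z(I + N)⁻¹ w‖² = ‖(I + N) v‖² - 4⟪v, N v⟫ + 4‖Z v‖²`,
and `⟪v, N v⟫ = ‖X v‖² + ‖Z v‖² + ε‖v‖² ≥ ‖Z v‖²` because the skew part `Y - Yᵀ` drops out of
the quadratic form. Hence `D̄` has spectral norm at most `1`, so does `D̄ᵀ`, and
`‖D‖ ≤ sigmoid d / L`. The map `z ↦ D φ(z) + C x + E u` is then Lipschitz with constant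
`sigmoid d < 1`, and Banach's fixed point theorem gives the unique solution.
-/

open Matrix

/-- The sigmoid function `sigmoid(x) = 1/(1 + e^{−x})`. -/
noncomputable def sigmoid (x : ℝ) : ℝ := 1 / (1 + Real.exp (-x))

open WithLp
open scoped Matrix.Norms.L2Operator

lemma sigmoid_pos (x : ℝ) : 0 < sigmoid x := by
  unfold sigmoid
  positivity

lemma sigmoid_lt_one (x : ℝ) : sigmoid x < 1 := by
  unfold sigmoid
  rw [div_lt_one (by positivity)]
  linarith [Real.exp_pos (-x)]

theorem ContinuousLinearMap.existsUnique_eq_apply_add {E F : Type*} [NormedAddCommGroup E]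
    [NormedSpace ℝ E] [CompleteSpace E] [NormedAddCommGroup F] [NormedSpace ℝ F]
    (T : F →L[ℝ] E) {φ : E → F}
    {L : ℝ} (hφ : ∀ z₁ z₂, ‖φ z₁ - φ z₂‖ ≤ L * ‖z₁ - z₂‖) (hTL : ‖T‖ * L < 1) (b : E) :
    ∃! z, z = T (φ z) + b := by
  have hf : ContractingWith (‖T‖ * L).toNNReal (fun z ↦ T (φ z) + b) := by
    refine ⟨Real.toNNReal_lt_one.2 hTL, LipschitzWith.of_dist_le' fun z₁ z₂ ↦ ?_⟩
    rw [dist_eq_norm, dist_eq_norm, add_sub_add_right_eq_sub, ← map_sub]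
    calc ‖T (φ z₁ - φ z₂)‖ ≤ ‖T‖ * ‖φ z₁ - φ z₂‖ := T.le_opNorm _
      _ ≤ ‖T‖ * (L * ‖z₁ - z₂‖) := by gcongr; exact hφ z₁ z₂
      _ = ‖T‖ * L * ‖z₁ - z₂‖ := by ring
  exact ⟨_, hf.fixedPoint_isFixedPt.symm, fun z hz ↦ hf.fixedPoint_unique hz.symm⟩

theorem EuclideanSpace.real_norm_sq_eq_dotProduct {n : Type*} [Fintype n]
    (x : EuclideanSpace ℝ n) : ‖x‖ ^ 2 = ofLp x ⬝ᵥ ofLp x := by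
  rw [← real_inner_self_eq_norm_sq, EuclideanSpace.inner_eq_star_dotProduct, star_trivial]

theorem dotProduct_self_nonneg {n R : Type*} [Fintype n] [Ring R] [LinearOrder R]
    [IsStrictOrderedRing R] (v : n → R) : 0 ≤ v ⬝ᵥ v :=
  Fintype.sum_nonneg fun i ↦ mul_self_nonneg (v i)

namespace Matrix

variable {m n : Type*} [Fintype m] [Fintype n]

lemma dotProduct_mulVec_transpose_mul_self (A : Matrix m n ℝ) (v : n → ℝ) :
    v ⬝ᵥ (Aᵀ * A) *ᵥ v = (A *ᵥ v) ⬝ᵥ (A *ᵥ v) := by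
  rw [← mulVec_mulVec, dotProduct_mulVec, vecMul_transpose]

lemma dotProduct_mulVec_sub_transpose_self (Y : Matrix n n ℝ) (v : n → ℝ) :
    v ⬝ᵥ (Y - Yᵀ) *ᵥ v = 0 := by
  rw [sub_mulVec, dotProduct_sub, mulVec_transpose, dotProduct_comm v (v ᵥ* Y),
    ← dotProduct_mulVec, sub_self]

variable [DecidableEq n]

lemma mulVec_dotProduct_self_le_dotProduct_mulVec (X Y : Matrix n n ℝ) (Z : Matrix m n ℝ)
    {ε : ℝ} (hε : 0 ≤ ε) (v : n → ℝ) :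
    (Z *ᵥ v) ⬝ᵥ (Z *ᵥ v) ≤ v ⬝ᵥ (Xᵀ * X + (Y - Yᵀ) + Zᵀ * Z + ε • 1) *ᵥ v := by
  simp only [add_mulVec, dotProduct_add, dotProduct_mulVec_transpose_mul_self,
    dotProduct_mulVec_sub_transpose_self, smul_mulVec, one_mulVec, dotProduct_smul, smul_eq_mul]
  nlinarith [dotProduct_self_nonneg (X *ᵥ v), dotProduct_self_nonneg v]

lemma isUnit_one_add_of_dotProduct_mulVec_nonneg {M : Matrix n n ℝ}
    (hM : ∀ v, 0 ≤ v ⬝ᵥ M *ᵥ v) : IsUnit (1 + M) := by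
  rw [isUnit_iff_isUnit_det, isUnit_iff_ne_zero, Ne, ← exists_mulVec_eq_zero_iff]
  rintro ⟨v, hv0, hv⟩
  have hsum : v ⬝ᵥ v + v ⬝ᵥ M *ᵥ v = 0 := by
    rw [← dotProduct_zero v, ← hv, add_mulVec, one_mulVec, dotProduct_add]
  have hpos : 0 < v ⬝ᵥ v :=
    (dotProduct_self_nonneg v).lt_of_ne' (dotProduct_self_eq_zero.not.2 hv0)
  linarith [hM v]

noncomputable def cayleyStack (M : Matrix n n ℝ) (Z : Matrix m n ℝ) : Matrix (n ⊕ m) n ℝ :=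
  fromRows ((1 - M) * (1 + M)⁻¹) ((-2 : ℝ) • (Z * (1 + M)⁻¹))

variable {M : Matrix n n ℝ} {Z : Matrix m n ℝ}

lemma dotProduct_cayleyStack_mulVec_le (hZ : ∀ v, (Z *ᵥ v) ⬝ᵥ (Z *ᵥ v) ≤ v ⬝ᵥ M *ᵥ v)
    (w : n → ℝ) : (cayleyStack M Z *ᵥ w) ⬝ᵥ (cayleyStack M Z *ᵥ w) ≤ w ⬝ᵥ w := by
  have hdet : IsUnit (1 + M).det := (isUnit_iff_isUnit_det _).1 <|
    isUnit_one_add_of_dotProduct_mulVec_nonneg fun v ↦ (dotProduct_self_nonneg _).trans (hZ v)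
  obtain ⟨v, rfl⟩ : ∃ v, (1 + M) *ᵥ v = w :=
    ⟨(1 + M)⁻¹ *ᵥ w, by rw [mulVec_mulVec, mul_nonsing_inv _ hdet, one_mulVec]⟩
  have hv : (1 + M)⁻¹ *ᵥ (1 + M) *ᵥ v = v := by
    rw [mulVec_mulVec, nonsing_inv_mul _ hdet, one_mulVec]
  simp only [cayleyStack, fromRows_mulVec, ← mulVec_mulVec, smul_mulVec, hv]
  simp only [sumElim_dotProduct_sumElim, sub_mulVec, add_mulVec, one_mulVec, dotProduct_sub,
    sub_dotProduct, dotProduct_add, add_dotProduct, smul_dotProduct, dotProduct_smul, smul_eq_mul,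
    dotProduct_comm (M *ᵥ v) v]
  linarith [hZ v]

lemma l2_opNorm_cayleyStack_le_one (hZ : ∀ v, (Z *ᵥ v) ⬝ᵥ (Z *ᵥ v) ≤ v ⬝ᵥ M *ᵥ v) :
    ‖cayleyStack M Z‖ ≤ 1 := by
  refine ContinuousLinearMap.opNorm_le_bound _ zero_le_one fun w ↦ ?_
  rw [one_mul, ← pow_le_pow_iff_left₀ (norm_nonneg _) (norm_nonneg _) two_ne_zero,
    EuclideanSpace.real_norm_sq_eq_dotProduct, EuclideanSpace.real_norm_sq_eq_dotProduct]
  exact dotProduct_cayleyStack_mulVec_le hZ _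

end Matrix

/-- Theorem 1, well-posedness with the Cayley parametrization:
with `φ` an `L`-Lipschitz map into `ℝ^{n_w}` (here `n_w = n_z + p ≥ n_z`, rows
indexed by `Fin n_z ⊕ Fin p`), `N = XᵀX + (Y − Yᵀ) + ZᵀZ + εI` with `ε > 0`,
`D̄ = [Cayley(N); −2Z(I+N)⁻¹]` and `D = (sigmoid(d)/L)·D̄ᵀ`, the algebraic loop
`z = D·φ(z) + C·x + E·u` has a unique solution for every `C`, `E`, `x`, `u`. -/
theorem lfr_wellposed_cayley {nz p nx nu : ℕ}
    (L : ℝ) (hL : 0 < L)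
    (φ : EuclideanSpace ℝ (Fin nz) → EuclideanSpace ℝ (Fin nz ⊕ Fin p))
    (hφ : ∀ z₁ z₂, ‖φ z₁ - φ z₂‖ ≤ L * ‖z₁ - z₂‖)
    (X Y : Matrix (Fin nz) (Fin nz) ℝ) (Z : Matrix (Fin p) (Fin nz) ℝ)
    (ε : ℝ) (hε : 0 < ε) (d : ℝ)
    (N : Matrix (Fin nz) (Fin nz) ℝ)
    (hN : N = Xᵀ * X + (Y - Yᵀ) + Zᵀ * Z + ε • (1 : Matrix (Fin nz) (Fin nz) ℝ))
    (Dbar : Matrix (Fin nz ⊕ Fin p) (Fin nz) ℝ)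
    (hDbar : Dbar = Matrix.fromRows ((1 - N) * (1 + N)⁻¹) ((-2 : ℝ) • (Z * (1 + N)⁻¹)))
    (D : Matrix (Fin nz) (Fin nz ⊕ Fin p) ℝ)
    (hD : D = (sigmoid d / L) • Dbarᵀ)
    (C : Matrix (Fin nz) (Fin nx) ℝ) (E : Matrix (Fin nz) (Fin nu) ℝ)
    (x : EuclideanSpace ℝ (Fin nx)) (u : EuclideanSpace ℝ (Fin nu)) :
    ∃! z : EuclideanSpace ℝ (Fin nz),
      z = Matrix.toEuclideanLin D (φ z) + Matrix.toEuclideanLin C x +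
            Matrix.toEuclideanLin E u := by
  have hNZ (v : Fin nz → ℝ) : (Z *ᵥ v) ⬝ᵥ (Z *ᵥ v) ≤ v ⬝ᵥ N *ᵥ v := by
    rw [hN]; exact mulVec_dotProduct_self_le_dotProduct_mulVec X Y Z hε.le v
  have hD_norm : ‖D‖ ≤ sigmoid d / L := by
    have hσ := sigmoid_pos d
    rw [hD, norm_smul, ← conjTranspose_eq_transpose_of_trivial, l2_opNorm_conjTranspose,
      Real.norm_of_nonneg (by positivity)]
    exact mul_le_of_le_one_right (by positivity)
      (by rw [hDbar]; exact l2_opNorm_cayleyStack_le_one hNZ)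
  have hDL : ‖D‖ * L < 1 :=
    calc ‖D‖ * L ≤ sigmoid d / L * L := by gcongr
      _ = sigmoid d := div_mul_cancel₀ _ hL.ne'
      _ < 1 := sigmoid_lt_one d
  -- unfolding the l2 operator norm of `D` to that of `toEuclideanLin D` spares a slow unification
  rw [l2_opNorm_def] at hDL
  simp_rw [add_assoc]
  exact ContinuousLinearMap.existsUnique_eq_apply_add _ hφ hDL _
end
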